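/- arXiv:2007.10133 — 5 statements merged into one kernel-verified Lean document; each statement's English description precedes it below -/
import Mathlib

section
/- Let T > 0, let g ∈ L²(AddCircle T; ℂ), and let A : ℕ+ → ℂ be a sequence with Σₙ |Aₙ| < ∞. Then the series Σₙ Aₙ gₙ (where gₙ is the n-th dilation of g) converges in L²(AddCircle T) to a function F, and for every integer k the k-th Fourier coefficient of F equals Σ over those n ∈ ℕ+ with n ∣ k of Aₙ · ĝ(k/n). -/
/-!
Translating by the `n`-torsion point `T / n` fixes `x ↦ g (n • x)` and multiplies its `k`-th
Fourier coefficient by `e^{-2πik/n}`, so that coefficient vanishes unless `n ∣ k`; when `k = n m`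
the substitution `y = n • x` (which preserves Haar measure) turns it into `ĝ(m)`. Dilation is an
isometry of `L²`, so `∑ Aₙ gₙ` converges absolutely there, and since Fourier coefficients are
continuous on `L²` they can be computed termwise.
-/

open MeasureTheory Filter
open scoped Topology

namespace AddCircle
variable {T : ℝ}

theorem fourier_nsmul (m : ℤ) (n : ℕ) (x : AddCircle T) :
    fourier m (n • x) = fourier (n * m) x := by
  rw [fourier_apply, fourier_apply, ← natCast_zsmul x n, smul_smul, mul_comm]

variable [Fact (0 < T)]

theorem fourier_coe_period_div_eq_one_iff {n : ℕ} (hn : 0 < n) (k : ℤ) :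
    fourier k ((T / n : ℝ) : AddCircle T) = 1 ↔ (n : ℤ) ∣ k := by
  rw [fourier_apply, Circle.coe_eq_one, ← toCircle_zero (T := T),
    (injective_toCircle (Fact.out : 0 < T).ne').eq_iff, ← addOrderOf_dvd_iff_zsmul_eq_zero,
    addOrderOf_period_div hn]

theorem measurePreserving_nsmul {n : ℕ} (hn : n ≠ 0) :
    MeasurePreserving (fun x : AddCircle T => n • x) haarAddCircle haarAddCircle := by
  simpa only [natCast_zsmul] using
    Measure.measurePreserving_zsmul haarAddCircle (n := (n : ℤ)) (by exact_mod_cast hn)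

variable {E : Type*} [NormedAddCommGroup E] [NormedSpace ℂ E]

theorem fourierCoeff_comp_nsmul_mul {n : ℕ} (hn : n ≠ 0) {g : AddCircle T → E}
    (hg : AEStronglyMeasurable g haarAddCircle) (m : ℤ) :
    fourierCoeff (fun x => g (n • x)) (n * m) = fourierCoeff g m := by
  have h := measurePreserving_nsmul (T := T) hn
  have hf : AEStronglyMeasurable (fun y => fourier (-m) y • g y)
      (Measure.map (fun x => n • x) (haarAddCircle (T := T))) := by
    rw [h.map_eq]
    exact (map_continuous _).aestronglyMeasurable.smul hg
  conv_rhs => rw [fourierCoeff, ← h.map_eq, integral_map h.aemeasurable hf]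
  simp only [fourierCoeff, fourier_nsmul, mul_neg]

theorem fourierCoeff_comp_nsmul_of_not_dvd {n : ℕ} (hn : 0 < n) (g : AddCircle T → E) {k : ℤ}
    (hk : ¬ (n : ℤ) ∣ k) : fourierCoeff (fun x => g (n • x)) k = 0 := by
  set a : AddCircle T := ((T / n : ℝ) : AddCircle T)
  have hna : n • a = 0 := addOrderOf_period_div (p := T) hn ▸ addOrderOf_nsmul_eq_zero a
  have hc : fourierCoeff (fun x => g (n • x)) k =
      fourier (-k) a • fourierCoeff (fun x => g (n • x)) k := by
    rw [fourierCoeff, ← integral_smul, ← integral_add_right_eq_self _ a]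
    refine integral_congr_ae (ae_of_all _ fun x => ?_)
    simp only [nsmul_add, hna, add_zero, fourier_apply, zsmul_add, toCircle_add, Circle.coe_mul,
      smul_smul, mul_comm]
  have h1 : fourier (-k) a ≠ 1 := by
    rwa [Ne, fourier_coe_period_div_eq_one_iff hn, Int.dvd_neg]
  have : (fourier (-k) a - 1) • fourierCoeff (fun x => g (n • x)) k = 0 := by
    rw [sub_smul, one_smul, ← hc, sub_self]
  exact (smul_eq_zero.mp this).resolve_left (sub_ne_zero.mpr h1)

theorem fourierCoeff_comp_nsmul {n : ℕ} (hn : 0 < n) {g : AddCircle T → E}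
    (hg : AEStronglyMeasurable g haarAddCircle) (k : ℤ) :
    fourierCoeff (fun x => g (n • x)) k =
      if (n : ℤ) ∣ k then fourierCoeff g (k / n) else 0 := by
  split_ifs with hk
  · obtain ⟨m, rfl⟩ := hk
    rw [Int.mul_ediv_cancel_left m (by exact_mod_cast hn.ne'),
      fourierCoeff_comp_nsmul_mul hn.ne' hg]
  · exact fourierCoeff_comp_nsmul_of_not_dvd hn g hk

theorem _root_.HasSum.fourierCoeff {ι : Type*} {v : ι → Lp ℂ 2 (haarAddCircle (T := T))}
    {S : Lp ℂ 2 (haarAddCircle (T := T))} (h : HasSum v S) (k : ℤ) :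
    HasSum (fun i => fourierCoeff (v i) k) (fourierCoeff S k) := by
  simp_rw [← fourierBasis_repr, fourierBasis.repr_apply_apply]
  exact h.mapL (innerSL ℂ _)

end AddCircle

theorem MeasureTheory.Lp.tendsto_eLpNorm_finsetSum_sub_of_hasSum {α E ι : Type*}
    [MeasurableSpace α] {μ : Measure α} [NormedAddCommGroup E] {p : ENNReal} [Fact (1 ≤ p)]
    {v : ι → Lp E p μ} {S : Lp E p μ} (h : HasSum v S) {f : ι → α → E}
    (hf : ∀ i, v i =ᵐ[μ] f i) :
    Tendsto (fun s : Finset ι => eLpNorm (fun x => (∑ i ∈ s, f i x) - S x) p μ) atTop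
      (𝓝 0) := by
  refine ((tendsto_Lp_iff_tendsto_eLpNorm' _ S).mp h).congr fun s => eLpNorm_congr_ae ?_
  filter_upwards [coeFn_fun_finsetSum s v, (eventually_all_finset s).mpr fun i _ => hf i]
    with x hsum hfx
  rw [Pi.sub_apply, hsum, Finset.sum_congr rfl hfx]

/-- For `g ∈ L²(AddCircle T; ℂ)` and an absolutely summable coefficient sequence
`A : ℕ+ → ℂ`, the series `∑ₙ Aₙ gₙ` of dilations `gₙ (x) = g (n • x)` converges in `L²`
to a function `F`, whose `k`-th Fourier coefficient is the Dirichlet-type sum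
`∑_{n ∣ k} Aₙ ĝ(k/n)`. -/
theorem statement1 (T : ℝ) [hT : Fact (0 < T)] (g : AddCircle T → ℂ)
    (hg : MemLp g 2 AddCircle.haarAddCircle) (A : ℕ+ → ℂ)
    (hA : Summable fun n : ℕ+ => ‖A n‖) :
    ∃ F : AddCircle T → ℂ, MemLp F 2 AddCircle.haarAddCircle ∧
      Tendsto (fun s : Finset ℕ+ =>
          eLpNorm (fun x : AddCircle T => (∑ n ∈ s, A n * g ((n : ℕ) • x)) - F x) 2
            AddCircle.haarAddCircle)
        atTop (nhds 0) ∧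
      ∀ k : ℤ, fourierCoeff F k =
        ∑' n : ℕ+, if ((n : ℕ) : ℤ) ∣ k then A n * fourierCoeff g (k / ((n : ℕ) : ℤ)) else 0 := by
  let v (n : ℕ+) : Lp ℂ 2 (AddCircle.haarAddCircle (T := T)) :=
    A n • Lp.compMeasurePreserving _ (AddCircle.measurePreserving_nsmul n.ne_zero) (hg.toLp g)
  have hv (n : ℕ+) : v n =ᵐ[AddCircle.haarAddCircle] fun x => A n * g ((n : ℕ) • x) := by
    have hn := AddCircle.measurePreserving_nsmul (T := T) n.ne_zero
    filter_upwards [Lp.coeFn_smul (A n) (Lp.compMeasurePreserving _ hn (hg.toLp g)),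
      Lp.coeFn_compMeasurePreserving (hg.toLp g) hn,
      hn.quasiMeasurePreserving.ae_eq_comp hg.coeFn_toLp] with x hsmul hcomp hg'
    rw [hsmul, Pi.smul_apply, hcomp, smul_eq_mul]
    exact congrArg (A n * ·) hg'
  obtain ⟨S, hS⟩ : Summable v := .of_norm <| by
    simpa only [v, norm_smul, Lp.norm_compMeasurePreserving] using hA.mul_right ‖hg.toLp g‖
  refine ⟨S, Lp.memLp S, Lp.tendsto_eLpNorm_finsetSum_sub_of_hasSum hS hv, fun k => ?_⟩
  refine ((hS.fourierCoeff k).congr_fun fun n => ?_).tsum_eq.symm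
  rw [fourierCoeff_congr_ae (hv n), fourierCoeff.const_mul,
    AddCircle.fourierCoeff_comp_nsmul n.pos hg.aestronglyMeasurable, mul_ite, mul_zero]
end

section
/- Let t : ℝ → ℝ be the 2-periodic function determined by t(x) = |x| − 1/2 for x ∈ [−1, 1]. Then for every x ∈ [−1, 1], the series Σ_{n=1}^{∞} 4^{−n} t(2ⁿ·x) converges and x² = 1/3 + t(x) − Σ_{n=1}^{∞} 4^{−n} t(2ⁿ·x). -/
noncomputable def Rf (y : ℝ) : ℝ :=
  |y - 2 * (⌊(y + 1) / 2⌋ : ℝ)| - (y - 2 * (⌊(y + 1) / 2⌋ : ℝ)) ^ 2 - 1 / 6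

lemma zmem (y : ℝ) : (-1 : ℝ) ≤ y - 2 * (⌊(y + 1) / 2⌋ : ℝ) ∧
    y - 2 * (⌊(y + 1) / 2⌋ : ℝ) < 1 := by
  have h1 := Int.floor_le ((y + 1) / 2)
  have h2 := Int.lt_floor_add_one ((y + 1) / 2)
  constructor <;> linarith

lemma tEq (t : ℝ → ℝ) (hper : Function.Periodic t 2)
    (ht : ∀ x ∈ Set.Icc (-1 : ℝ) 1, t x = |x| - 1 / 2) (y : ℝ) :
    t y = |y - 2 * (⌊(y + 1) / 2⌋ : ℝ)| - 1 / 2 := by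
  have hz := zmem y
  have h1 : t (y - (⌊(y + 1) / 2⌋ : ℝ) * 2) = t y := hper.sub_int_mul_eq _
  have h2 : y - (⌊(y + 1) / 2⌋ : ℝ) * 2 = y - 2 * (⌊(y + 1) / 2⌋ : ℝ) := by ring
  rw [h2] at h1
  rw [← h1, ht _ ⟨hz.1, le_of_lt hz.2⟩]

lemma sqIdent (z : ℝ) (hz1 : (-1 : ℝ) ≤ z) (hz2 : z < 1) :
    2 * |2 * z - 2 * (⌊z + 1 / 2⌋ : ℝ)| - (2 * z - 2 * (⌊z + 1 / 2⌋ : ℝ)) ^ 2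
      = 4 * |z| - 4 * z ^ 2 := by
  rcases lt_or_ge z (-(1/2) : ℝ) with h | h
  · have hm : ⌊z + 1 / 2⌋ = -1 := by
      apply Int.floor_eq_iff.mpr <;> constructor <;> push_cast <;> linarith
    rw [hm, abs_of_nonneg (by push_cast [hm] at *; linarith),
      abs_of_nonpos (by linarith)]
    push_cast; ring
  · rcases lt_or_ge z (1/2 : ℝ) with h' | h'
    · have hm : ⌊z + 1 / 2⌋ = 0 := by
        apply Int.floor_eq_iff.mpr <;> constructor <;> push_cast <;> linarith
      rw [hm]
      rcases abs_cases z with ⟨ha, _⟩ | ⟨ha, hneg⟩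
      · rw [abs_of_nonneg (by push_cast; linarith [abs_nonneg z, ha])]
        push_cast; rw [ha] at *; nlinarith [abs_nonneg z]
      · rw [abs_of_nonpos (by push_cast; linarith)]
        push_cast; rw [ha]; ring
    · have hm : ⌊z + 1 / 2⌋ = 1 := by
        apply Int.floor_eq_iff.mpr <;> constructor <;> push_cast <;> linarith
      rw [hm, abs_of_nonpos (by push_cast; linarith),
        abs_of_nonneg (by linarith)]
      push_cast; ring

lemma RRec (t : ℝ → ℝ) (hper : Function.Periodic t 2)
    (ht : ∀ x ∈ Set.Icc (-1 : ℝ) 1, t x = |x| - 1 / 2) (y : ℝ) :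
    t (2 * y) = 4 * Rf y - Rf (2 * y) := by
  set k : ℤ := ⌊(y + 1) / 2⌋ with hk
  set z : ℝ := y - 2 * (k : ℝ) with hzdef
  have hz := zmem y
  rw [← hzdef] at hz
  have hfl : ⌊(2 * y + 1) / 2⌋ = ⌊z + 1 / 2⌋ + 2 * k := by
    have : (2 * y + 1) / 2 = (z + 1 / 2) + (2 * k : ℤ) := by
      push_cast [hzdef]; ring
    rw [this, Int.floor_add_intCast]
  have hz' : 2 * y - 2 * ((⌊(2 * y + 1) / 2⌋ : ℤ) : ℝ)
      = 2 * z - 2 * (⌊z + 1 / 2⌋ : ℝ) := by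
    rw [hfl]; push_cast [hzdef]; ring
  have hteq := tEq t hper ht (2 * y)
  have hsq := sqIdent z hz.1 hz.2
  unfold Rf
  rw [hteq, hz', ← hzdef]
  nlinarith [hsq]

lemma Rf_bound (y : ℝ) : |Rf y| ≤ 1 / 6 := by
  have hz := zmem y
  unfold Rf
  set z : ℝ := y - 2 * (⌊(y + 1) / 2⌋ : ℝ) with hzdef
  clear_value z
  have h1 : |z| ≤ 1 := abs_le.mpr ⟨hz.1, le_of_lt hz.2⟩
  have h0 : 0 ≤ |z| := abs_nonneg z
  have hsq : z ^ 2 = |z| ^ 2 := (sq_abs z).symm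
  have k1 : 0 ≤ |z| * (1 - |z|) := mul_nonneg h0 (by linarith)
  have k2 : 0 ≤ (|z| - 1/2) ^ 2 := sq_nonneg _
  rw [abs_le]
  constructor
  · nlinarith [hsq, k1]
  · nlinarith [hsq, k2]

lemma Rf_Icc (x : ℝ) (hx : x ∈ Set.Icc (-1 : ℝ) 1) : Rf x = |x| - x ^ 2 - 1 / 6 := by
  obtain ⟨hx1, hx2⟩ := hx
  rcases eq_or_lt_of_le hx2 with h | h
  · subst h
    have h1 : ⌊((1:ℝ) + 1) / 2⌋ = 1 := by norm_num
    unfold Rf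
    rw [h1]
    norm_num
  · have hm : ⌊(x + 1) / 2⌋ = 0 := by
      apply Int.floor_eq_iff.mpr <;> constructor <;> push_cast <;> linarith
    unfold Rf; rw [hm]; push_cast; ring_nf

/-- Expansion of `x²` on `[-1, 1]` in the base generated by the `2`-periodic triangle wave
`t(x) = |x| - 1/2`: for every `x ∈ [-1, 1]`, the series `∑_{n ≥ 1} 4⁻ⁿ t(2ⁿ x)` converges
and `x² = 1/3 + t(x) - ∑_{n ≥ 1} 4⁻ⁿ t(2ⁿ x)`. -/
theorem statement8 (t : ℝ → ℝ) (hper : Function.Periodic t 2)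
    (ht : ∀ x ∈ Set.Icc (-1 : ℝ) 1, t x = |x| - 1 / 2) :
    ∀ x ∈ Set.Icc (-1 : ℝ) 1,
      Summable (fun n : ℕ => (1 / 4 : ℝ) ^ (n + 1) * t ((2 : ℝ) ^ (n + 1) * x)) ∧
      x ^ 2 = 1 / 3 + t x - ∑' n : ℕ, (1 / 4 : ℝ) ^ (n + 1) * t ((2 : ℝ) ^ (n + 1) * x) := by
  intro x hx
  -- summability
  have htb : ∀ y : ℝ, |t y| ≤ 1 / 2 := by
    intro y
    rw [tEq t hper ht y]
    have hz := zmem y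
    rw [abs_le]
    constructor <;>
      [nlinarith [abs_nonneg (y - 2 * (⌊(y + 1) / 2⌋ : ℝ))];
       nlinarith [abs_le.mpr ⟨hz.1, le_of_lt hz.2⟩]]
  have hsum : Summable (fun n : ℕ => (1 / 4 : ℝ) ^ (n + 1) * t ((2 : ℝ) ^ (n + 1) * x)) := by
    apply Summable.of_abs
    apply Summable.of_nonneg_of_le (fun n => abs_nonneg _)
      (fun n => ?_) (Summable.mul_left (1/2 : ℝ)
        (summable_geometric_of_lt_one (by norm_num) (by norm_num) : Summable fun n : ℕ => (1/4 : ℝ) ^ n))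
    rw [abs_mul, abs_pow]
    have : |(1/4 : ℝ)| = 1/4 := by norm_num
    rw [this]
    calc (1/4 : ℝ) ^ (n+1) * |t ((2:ℝ)^(n+1) * x)| ≤ (1/4 : ℝ) ^ (n+1) * (1/2) := by
          exact mul_le_mul_of_nonneg_left (htb _) (by positivity)
      _ ≤ 1/2 * (1/4 : ℝ) ^ n := by
          rw [pow_succ]; ring_nf; nlinarith [pow_nonneg (by norm_num : (0:ℝ) ≤ 1/4) n]
  refine ⟨hsum, ?_⟩
  -- partial sum formula
  have key : ∀ N : ℕ, ∑ n ∈ Finset.range N, (1 / 4 : ℝ) ^ (n + 1) * t ((2 : ℝ) ^ (n + 1) * x)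
      = (1 / 3 + t x - x ^ 2) - (1 / 4 : ℝ) ^ N * Rf ((2 : ℝ) ^ N * x) := by
    intro N
    induction N with
    | zero =>
      simp only [Finset.range_zero, Finset.sum_empty, pow_zero, one_mul]
      rw [Rf_Icc x hx, ht x hx]
      ring
    | succ N ih =>
      rw [Finset.sum_range_succ, ih]
      have h2 : (2 : ℝ) ^ (N + 1) * x = 2 * ((2 : ℝ) ^ N * x) := by ring
      rw [h2, RRec t hper ht ((2 : ℝ) ^ N * x)]
      rw [pow_succ, pow_succ]
      ring
  -- limit
  have htend : Filter.Tendsto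
      (fun N => ∑ n ∈ Finset.range N, (1 / 4 : ℝ) ^ (n + 1) * t ((2 : ℝ) ^ (n + 1) * x))
      Filter.atTop (nhds (1 / 3 + t x - x ^ 2)) := by
    have h0 : Filter.Tendsto (fun N : ℕ => (1 / 4 : ℝ) ^ N * Rf ((2 : ℝ) ^ N * x))
        Filter.atTop (nhds 0) := by
      have hg : Filter.Tendsto (fun N : ℕ => 1/6 * (1/4 : ℝ) ^ N) Filter.atTop (nhds 0) := by
        have := (tendsto_pow_atTop_nhds_zero_of_lt_one (by norm_num : (0:ℝ) ≤ 1/4)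
          (by norm_num : (1/4:ℝ) < 1)).const_mul (1/6 : ℝ)
        simpa using this
      apply squeeze_zero_norm _ hg
      intro N
      rw [Real.norm_eq_abs, abs_mul, abs_pow]
      have h4 : |(1/4 : ℝ)| = 1/4 := by norm_num
      rw [h4]
      calc (1/4 : ℝ) ^ N * |Rf ((2:ℝ)^N * x)| ≤ (1/4 : ℝ) ^ N * (1/6) :=
            mul_le_mul_of_nonneg_left (Rf_bound _) (by positivity)
        _ = 1/6 * (1/4 : ℝ) ^ N := by ring
    have := Filter.Tendsto.sub (tendsto_const_nhds
      (x := (1 / 3 + t x - x ^ 2))) h0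
    simp only [sub_zero] at this
    exact this.congr (fun N => (key N).symm)
  have htsum := hsum.hasSum.tendsto_sum_nat
  have := tendsto_nhds_unique htsum htend
  linarith
end

section
/- Let σ : ℝ → ℝ be the 2-periodic odd function determined by σ(x) = 1 for 0 < x < 1 and σ(0) = σ(1) = 0 (hence σ(x) = −1 for −1 < x < 0). Then for every x ∈ (−1, 1), the series Σ_{n=1}^{∞} 2^{−(n+1)} σ(2ⁿ·x) converges and x = (1/2)·σ(x) − Σ_{n=1}^{∞} 2^{−(n+1)} σ(2ⁿ·x). -/
/-!
Write `s` for the `2`-periodic sawtooth that equals `y` on `(-1, 1)` and `0` at the odd integers,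
and `e = s - σ`. Checking the pieces of one period gives the self-similarity
`e y = -σ y / 2 + e (2 y) / 2`. Iterating it `N` times,
`e x = -∑_{n < N} 2^{-(n+1)} σ (2ⁿ x) + 2^{-N} e (2ᴺ x)`, and the remainder tends to `0` because
`e` is bounded. On `(-1, 1)` we have `e x = x - σ x`; splitting off the term `n = 0` gives the
expansion.
-/

open Function Filter Topology

section IteratedFunctionalEquation

variable {α 𝕜 E : Type*} [NormedField 𝕜] [NormedAddCommGroup E] [NormedSpace 𝕜 E]
  {T : α → α} {f c : α → E} {r : 𝕜}

theorem eq_sum_range_add_pow_smul_iterate (hf : ∀ y, f y = c y + r • f (T y)) (N : ℕ) (y : α) :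
    f y = ∑ n ∈ Finset.range N, r ^ n • c (T^[n] y) + r ^ N • f (T^[N] y) := by
  induction N with
  | zero => simp
  | succ N ih =>
    rw [ih, hf (T^[N] y), Finset.sum_range_succ, iterate_succ_apply', smul_add, smul_smul,
      pow_succ, add_assoc]

theorem hasSum_pow_smul_iterate (hr : ‖r‖ < 1) {C : ℝ} (hC : ∀ y, ‖f y‖ ≤ C)
    (hf : ∀ y, f y = c y + r • f (T y)) (y : α) :
    HasSum (fun n ↦ r ^ n • c (T^[n] y)) (f y) := by
  have hc : ∀ y, ‖c y‖ ≤ C + ‖r‖ * C := fun y ↦ by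
    rw [eq_sub_of_add_eq (hf y).symm]
    refine (norm_sub_le _ _).trans (add_le_add (hC y) ?_)
    rw [norm_smul]
    exact mul_le_mul_of_nonneg_left (hC _) (norm_nonneg r)
  have hgeom : Summable fun n : ℕ ↦ ‖r‖ ^ n := summable_geometric_of_lt_one (norm_nonneg r) hr
  have hnorm : Summable fun n ↦ ‖r ^ n • c (T^[n] y)‖ := by
    refine (hgeom.mul_right (C + ‖r‖ * C)).of_nonneg_of_le (fun _ ↦ norm_nonneg _) fun n ↦ ?_
    rw [norm_smul, norm_pow]
    exact mul_le_mul_of_nonneg_left (hc _) (by positivity)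
  rw [hasSum_iff_tendsto_nat_of_summable_norm hnorm]
  have hrem : Tendsto (fun N ↦ r ^ N • f (T^[N] y)) atTop (𝓝 0) := by
    have hbound : Tendsto (fun N ↦ ‖r‖ ^ N * C) atTop (𝓝 0) := by
      simpa using (tendsto_pow_atTop_nhds_zero_of_lt_one (norm_nonneg r) hr).mul_const C
    refine squeeze_zero_norm (fun N ↦ ?_) hbound
    rw [norm_smul, norm_pow]
    exact mul_le_mul_of_nonneg_left (hC _) (by positivity)
  simpa [eq_sub_of_add_eq (eq_sum_range_add_pow_smul_iterate hf _ y).symm] using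
    (tendsto_const_nhds (x := f y)).sub hrem

end IteratedFunctionalEquation

/-- Equals `y` on `(-1, 1)`; at the odd integers, where `Int.fract ((y + 1) / 2) = 0`, it takes
the mean `0` of its one-sided limits. -/
noncomputable def sawtooth (y : ℝ) : ℝ :=
  if Int.fract ((y + 1) / 2) = 0 then 0 else 2 * Int.fract ((y + 1) / 2) - 1

theorem sawtooth_periodic : Periodic sawtooth 2 := by
  intro y
  rw [sawtooth, sawtooth, show (y + 2 + 1) / 2 = (y + 1) / 2 + 1 by ring, Int.fract_add_one]

theorem sawtooth_of_mem_Ioo {y : ℝ} (hy : y ∈ Set.Ioo (-1) 1) : sawtooth y = y := by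
  have hfract : Int.fract ((y + 1) / 2) = (y + 1) / 2 :=
    Int.fract_eq_self.2 ⟨by linarith [hy.1], by linarith [hy.2]⟩
  rw [sawtooth, hfract, if_neg (by linarith [hy.1])]
  ring

theorem sawtooth_neg_one : sawtooth (-1) = 0 := by
  norm_num [sawtooth]

theorem sawtooth_one : sawtooth 1 = 0 := by
  norm_num [sawtooth]

theorem abs_sawtooth_le_one (y : ℝ) : |sawtooth y| ≤ 1 := by
  rw [sawtooth]
  split_ifs
  · simp
  · rw [abs_le]
    constructor <;> linarith [Int.fract_nonneg ((y + 1) / 2), Int.fract_lt_one ((y + 1) / 2)]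

section SquareWave

variable {σ : ℝ → ℝ} (hper : Periodic σ 2) (hodd : ∀ x, σ (-x) = -σ x)
  (hpos : ∀ x : ℝ, 0 < x → x < 1 → σ x = 1) (h0 : σ 0 = 0) (h1 : σ 1 = 0)

include hodd hpos in
theorem squareWave_eq_neg_one {y : ℝ} (hy₁ : -1 < y) (hy₀ : y < 0) : σ y = -1 := by
  rw [← neg_neg y, hodd, hpos (-y) (by linarith) (by linarith)]

include hodd h1 in
theorem squareWave_neg_one : σ (-1) = 0 := by
  rw [hodd, h1, neg_zero]

include hper hodd hpos h0 h1 in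
theorem abs_squareWave_le_one (y : ℝ) : |σ y| ≤ 1 := by
  obtain ⟨z, ⟨hz₁, hz₂⟩, hyz⟩ := hper.exists_mem_Ioc two_pos y (-1)
  norm_num at hz₂
  rw [hyz]
  rcases lt_trichotomy z 0 with hz | rfl | hz
  · simp [squareWave_eq_neg_one hodd hpos hz₁ hz]
  · simp [h0]
  · rcases hz₂.lt_or_eq with hz₂ | rfl
    · simp [hpos z hz hz₂]
    · simp [h1]

include hper hodd hpos h0 h1 in
theorem sawtooth_sub_squareWave_eq_of_mem_Ico {z : ℝ} (hz : z ∈ Set.Ico (-1) 1) :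
    sawtooth z - σ z = -(σ z / 2) + 1 / 2 * (sawtooth (2 * z) - σ (2 * z)) := by
  obtain ⟨hz₁, hz₂⟩ := hz
  have hsaw (w : ℝ) (hw₁ : -1 < w) (hw₂ : w < 1) : sawtooth w = w :=
    sawtooth_of_mem_Ioo ⟨hw₁, hw₂⟩
  have hneg (w : ℝ) (hw₁ : -1 < w) (hw₂ : w < 0) : σ w = -1 :=
    squareWave_eq_neg_one hodd hpos hw₁ hw₂
  rcases hz₁.eq_or_lt with rfl | hz₁
  · rw [show 2 * (-1 : ℝ) = 0 - 2 by norm_num, hper.sub_eq, sawtooth_periodic.sub_eq,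
      squareWave_neg_one hodd h1, sawtooth_neg_one, h0, hsaw 0 (by norm_num) (by norm_num)]
    norm_num
  rcases lt_trichotomy z (-1 / 2) with hz | rfl | hz
  · rw [← hper (2 * z), ← sawtooth_periodic (2 * z), hsaw z hz₁ (by linarith),
      hsaw (2 * z + 2) (by linarith) (by linarith), hneg z hz₁ (by linarith),
      hpos (2 * z + 2) (by linarith) (by linarith)]
    ring
  · rw [show 2 * (-1 / 2 : ℝ) = -1 by norm_num, squareWave_neg_one hodd h1, sawtooth_neg_one,
      hsaw _ (by norm_num) (by norm_num), hneg _ (by norm_num) (by norm_num)]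
    norm_num
  rcases lt_trichotomy z 0 with hz' | rfl | hz'
  · rw [hsaw z hz₁ (by linarith), hsaw (2 * z) (by linarith) (by linarith), hneg z hz₁ hz',
      hneg (2 * z) (by linarith) (by linarith)]
    ring
  · norm_num [h0, hsaw 0]
  rcases lt_trichotomy z (1 / 2) with hz | rfl | hz
  · rw [hsaw z hz₁ hz₂, hsaw (2 * z) (by linarith) (by linarith), hpos z hz' hz₂,
      hpos (2 * z) (by linarith) (by linarith)]
    ring
  · rw [show 2 * (1 / 2 : ℝ) = 1 by norm_num, h1, sawtooth_one,
      hsaw _ (by norm_num) (by norm_num), hpos _ (by norm_num) (by norm_num)]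
    norm_num
  · rw [← hper.sub_eq (2 * z), ← sawtooth_periodic.sub_eq (2 * z), hsaw z hz₁ hz₂,
      hsaw (2 * z - 2) (by linarith) (by linarith), hpos z hz' hz₂,
      hneg (2 * z - 2) (by linarith) (by linarith)]
    ring

include hper hodd hpos h0 h1 in
theorem sawtooth_sub_squareWave_eq (y : ℝ) :
    sawtooth y - σ y = -(σ y / 2) + 1 / 2 * (sawtooth (2 * y) - σ (2 * y)) := by
  let defect y := sawtooth y - σ y - (-(σ y / 2) + 1 / 2 * (sawtooth (2 * y) - σ (2 * y)))
  have hdefect : Periodic defect 2 := fun y ↦ by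
    simp only [defect, show 2 * (y + 2) = 2 * y + 2 + 2 by ring, hper _, sawtooth_periodic _]
  obtain ⟨z, hz, hyz⟩ := hdefect.exists_mem_Ico two_pos y (-1)
  norm_num at hz
  rw [← sub_eq_zero]
  change defect y = 0
  rw [hyz, sub_eq_zero]
  exact sawtooth_sub_squareWave_eq_of_mem_Ico hper hodd hpos h0 h1 hz

end SquareWave

/-- Expansion of the sawtooth `x` on `(-1, 1)` in the base generated by the `2`-periodic
odd square wave `σ` (with `σ = 1` on `(0,1)`, `σ 0 = σ 1 = 0`): for every `x ∈ (-1, 1)`,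
the series `∑_{n ≥ 1} 2^{-(n+1)} σ(2ⁿ x)` converges and
`x = (1/2) σ(x) - ∑_{n ≥ 1} 2^{-(n+1)} σ(2ⁿ x)`. -/
theorem statement9 (σ : ℝ → ℝ) (hper : Function.Periodic σ 2)
    (hodd : ∀ x, σ (-x) = -σ x)
    (hpos : ∀ x : ℝ, 0 < x → x < 1 → σ x = 1)
    (h0 : σ 0 = 0) (h1 : σ 1 = 0) :
    ∀ x ∈ Set.Ioo (-1 : ℝ) 1,
      Summable (fun n : ℕ => (1 / 2 : ℝ) ^ (n + 2) * σ ((2 : ℝ) ^ (n + 1) * x)) ∧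
      x = (1 / 2) * σ x - ∑' n : ℕ, (1 / 2 : ℝ) ^ (n + 2) * σ ((2 : ℝ) ^ (n + 1) * x) := by
  intro x hx
  have hbound (y : ℝ) : ‖sawtooth y - σ y‖ ≤ 2 := (norm_sub_le _ _).trans <| by
    simp only [Real.norm_eq_abs]
    linarith [abs_sawtooth_le_one y, abs_squareWave_le_one hper hodd hpos h0 h1 y]
  have hexpansion := hasSum_pow_smul_iterate (T := (2 * ·)) (c := fun y ↦ -(σ y / 2))
    (r := (1 / 2 : ℝ)) (by norm_num) hbound (sawtooth_sub_squareWave_eq hper hodd hpos h0 h1) x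
  simp only [mul_left_iterate_apply, smul_eq_mul, sawtooth_of_mem_Ioo hx] at hexpansion
  have hsum : HasSum (fun n : ℕ ↦ (1 / 2 : ℝ) ^ (n + 2) * σ ((2 : ℝ) ^ (n + 1) * x))
      (1 / 2 * σ x - x) := by
    have htail := ((hasSum_nat_add_iff' 1).2 hexpansion).neg
    simp only [Finset.sum_range_one, pow_zero, one_mul] at htail
    rw [show 1 / 2 * σ x - x = -(x - σ x - -(σ x / 2)) by ring]
    exact htail.congr_fun fun n ↦ by ring
  exact ⟨hsum.summable, by rw [hsum.tsum_eq]; ring⟩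
end

section
/- For every x ∈ [−1, 1], the series Σ_{n=1}^{∞} (2·(−1)ⁿ/(1 + n²π²)) cos(nπx) converges and cosh x = sinh 1 · (1 + Σ_{n=1}^{∞} (2·(−1)ⁿ/(1 + n²π²)) cos(nπx)). -/
/-!
Extend `cosh` from `[-1, 1]` to a 2-periodic function; since `cosh` is even, the extension is
continuous. Writing `cosh x = (eˣ + e⁻ˣ)/2` and integrating exponentials, its `n`-th complex
Fourier coefficient is `(-1)ⁿ sinh 1 / (1 + n²π²)`. These coefficients are absolutely summable, so
the Fourier series converges pointwise to the function, and since the coefficients are even in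
`n`, pairing the terms `±n` turns it into the cosine series.
-/

open Real Filter

open Complex (I)

theorem fourierCoeffOn_add {a b : ℝ} (hab : a < b) {f g : ℝ → ℂ}
    (hf : IntervalIntegrable f MeasureTheory.volume a b)
    (hg : IntervalIntegrable g MeasureTheory.volume a b) (n : ℤ) :
    fourierCoeffOn hab (f + g) n = fourierCoeffOn hab f n + fourierCoeffOn hab g n := by
  have hfourier : Continuous fun x : ℝ => fourier (-n) (x : AddCircle (b - a)) :=
    (map_continuous _).comp (AddCircle.continuous_mk' _)
  simp only [fourierCoeffOn_eq_integral, Pi.add_apply, smul_eq_mul, mul_add]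
  rw [intervalIntegral.integral_add (hf.continuousOn_mul hfourier.continuousOn)
    (hg.continuousOn_mul hfourier.continuousOn), smul_add]

theorem fourierCoeffOn_cexp_mul {a b : ℝ} (hab : a < b) {c : ℂ} {n : ℤ}
    (hc : c ≠ 2 * π * I * n / (b - a)) :
    fourierCoeffOn hab (fun x => Complex.exp (c * x)) n =
      fourier (-n) (a : AddCircle (b - a)) * (Complex.exp (c * b) - Complex.exp (c * a)) /
        ((b - a) * (c - 2 * π * I * n / (b - a))) := by
  set w : ℂ := 2 * π * I * n / (b - a)
  have hmul : ∀ x : ℝ,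
      fourier (-n) (x : AddCircle (b - a)) • Complex.exp (c * x) = Complex.exp ((c - w) * x) := by
    intro x
    rw [fourier_coe_apply, smul_eq_mul, ← Complex.exp_add]
    simp only [w]
    push_cast
    ring_nf
  have hperiod : fourier (-n) (b : AddCircle (b - a)) = fourier (-n) (a : AddCircle (b - a)) := by
    rw [← AddCircle.coe_add_period (b - a) a, add_sub_cancel]
  have hba : ((b - a : ℝ) : ℂ) ≠ 0 := Complex.ofReal_ne_zero.2 (sub_pos.2 hab).ne'
  rw [fourierCoeffOn_eq_integral]
  simp_rw [hmul]
  rw [integral_exp_mul_complex (sub_ne_zero.2 hc), ← hmul, ← hmul, hperiod, smul_eq_mul,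
    smul_eq_mul, Complex.real_smul]
  push_cast at hba ⊢
  field_simp

theorem summable_int_inv_one_add_sq_mul {c : ℝ} (hc : 0 < c) :
    Summable fun n : ℤ => (1 + n ^ 2 * c)⁻¹ := by
  refine Summable.of_norm_bounded_eventually
    ((Real.summable_one_div_int_pow.2 one_lt_two).mul_left c⁻¹) ?_
  filter_upwards [eventually_cofinite_ne 0] with n hn
  have hn2 : (0 : ℝ) < n ^ 2 := by positivity
  rw [Real.norm_of_nonneg (by positivity), mul_one_div, div_eq_mul_inv, ← mul_inv, mul_comm c]
  exact inv_anti₀ (by positivity) (by linarith)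

theorem hasSum_fourier_series_of_summable_fourierCoeffOn {a b : ℝ} (hab : a < b) {f : ℝ → ℂ}
    (hf : ContinuousOn f (Set.Icc a b)) (hfab : f a = f b)
    (hsum : Summable (fourierCoeffOn hab f)) {x : ℝ} (hx : x ∈ Set.Icc a b) :
    HasSum (fun n => fourierCoeffOn hab f n • fourier n (x : AddCircle (b - a))) (f x) := by
  have : Fact (0 < b - a) := ⟨sub_pos.2 hab⟩
  have hb : a + (b - a) = b := add_sub_cancel a b
  let F : C(AddCircle (b - a), ℂ) :=
    ⟨AddCircle.liftIco (b - a) a f, AddCircle.liftIco_continuous (by rwa [hb]) (by rwa [hb])⟩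
  have hF : fourierCoeff F = fourierCoeffOn hab f := by
    ext n
    rw [ContinuousMap.coe_mk, fourierCoeff_liftIco_eq]
    simp only [hb]
  have hFx : F x = f x := by
    rcases hx.2.lt_or_eq with hxb | rfl
    · exact AddCircle.liftIco_coe_apply ⟨hx.1, hb.symm ▸ hxb⟩
    · rw [ContinuousMap.coe_mk, ← AddCircle.liftIoc_eq_liftIco (by rwa [hb]),
        AddCircle.liftIoc_coe_apply ⟨hab, hb.ge⟩]
  have h := has_pointwise_sum_fourier_series_of_summable (f := F) (by rwa [hF]) x
  rwa [hF, hFx] at h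

theorem fourier_add_fourier_neg {T : ℝ} (n : ℤ) (x : ℝ) :
    fourier n (x : AddCircle T) + fourier (-n) (x : AddCircle T) =
      ((2 * Real.cos (2 * π * n * x / T) : ℝ) : ℂ) := by
  rw [fourier_coe_apply, fourier_coe_apply]
  push_cast
  rw [Complex.two_cos]
  ring_nf

theorem hasSum_cos_of_hasSum_fourier {T : ℝ} {c : ℤ → ℝ} (hc : ∀ n, c (-n) = c n) {x s : ℝ}
    (h : HasSum (fun n : ℤ => (c n : ℂ) • fourier n (x : AddCircle T)) s) :
    HasSum (fun n : ℕ => 2 * c (n + 1) * Real.cos (2 * π * (n + 1) * x / T)) (s - c 0) := by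
  have hpair : ∀ n : ℕ, (c n : ℂ) • fourier n (x : AddCircle T) +
      (c (-n) : ℂ) • fourier (-n : ℤ) (x : AddCircle T) =
        ((2 * c n * Real.cos (2 * π * n * x / T) : ℝ) : ℂ) := by
    intro n
    rw [hc, smul_eq_mul, smul_eq_mul, ← mul_add, fourier_add_fourier_neg]
    push_cast
    ring
  have hnat := h.nat_add_neg
  rw [fourier_zero, smul_eq_mul, mul_one, ← Complex.ofReal_add] at hnat
  simp only [hpair] at hnat
  rw [Complex.hasSum_ofReal] at hnat
  have hshift := (hasSum_nat_add_iff' 1).2 hnat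
  rw [Finset.sum_range_one] at hshift
  push_cast at hshift
  rwa [mul_zero, zero_mul, zero_div, Real.cos_zero, mul_one,
    show s + c 0 - 2 * c 0 = s - c 0 by ring] at hshift

noncomputable def coshFourierCoeff (n : ℤ) : ℝ :=
  (-1) ^ n * Real.sinh 1 / (1 + n ^ 2 * π ^ 2)

theorem coshFourierCoeff_neg (n : ℤ) : coshFourierCoeff (-n) = coshFourierCoeff n := by
  simp only [coshFourierCoeff, Int.cast_neg, neg_sq, zpow_neg, ← inv_zpow, inv_neg, inv_one]

theorem summable_coshFourierCoeff : Summable coshFourierCoeff := by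
  refine Summable.of_norm_bounded
    ((summable_int_inv_one_add_sq_mul (pow_pos pi_pos 2)).mul_left (Real.sinh 1)) fun n => ?_
  simp [coshFourierCoeff, abs_of_pos (sinh_pos_iff.2 one_pos),
    abs_of_pos (by positivity : (0 : ℝ) < 1 + n ^ 2 * π ^ 2), div_eq_mul_inv]

theorem fourierCoeffOn_cosh (n : ℤ) :
    fourierCoeffOn (by norm_num : (-1 : ℝ) < 1) (fun x => (Real.cosh x : ℂ)) n =
      coshFourierCoeff n := by
  have hcosh : (fun x : ℝ => (Real.cosh x : ℂ)) =
      (fun x : ℝ => 2⁻¹ * Complex.exp (1 * x)) + fun x : ℝ => 2⁻¹ * Complex.exp (-1 * x) := by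
    ext x
    simp [Complex.cosh, div_eq_inv_mul, mul_add]
  have hsign : fourier (-n) (((-1 : ℝ) : AddCircle ((1 : ℝ) - -1))) = (-1) ^ n := by
    rw [fourier_coe_apply, ← Complex.exp_pi_mul_I, ← Complex.exp_int_mul]
    push_cast
    ring_nf
  have hexp : ∀ s : ℂ, s.re ≠ 0 → s ≠ 2 * π * I * n / ((1 : ℝ) - (-1 : ℝ)) := by
    intro s hs h
    norm_num [h, Complex.div_ofNat_re] at hs
  have hcont : ∀ s : ℂ, IntervalIntegrable (fun x : ℝ => 2⁻¹ * Complex.exp (s * x))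
      MeasureTheory.volume (-1) 1 := fun s =>
    (by fun_prop : Continuous _).intervalIntegrable _ _
  rw [hcosh, fourierCoeffOn_add _ (hcont 1) (hcont (-1)), fourierCoeffOn.const_mul,
    fourierCoeffOn.const_mul, fourierCoeffOn_cexp_mul _ (hexp 1 (by simp)),
    fourierCoeffOn_cexp_mul _ (hexp (-1) (by simp)), hsign]
  have hsub : (1 : ℂ) - π * I * n ≠ 0 := fun h => by simpa using congrArg Complex.re h
  have hadd : (1 : ℂ) + π * I * n ≠ 0 := fun h => by simpa using congrArg Complex.re h
  have hden_sub : (1 - -1 : ℂ) * (1 - 2 * π * I * n / (1 - -1)) = 2 * (1 - π * I * n) := by ring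
  have hden_add : (1 - -1 : ℂ) * (-1 - 2 * π * I * n / (1 - -1)) = -2 * (1 + π * I * n) := by
    ring
  have hden : (1 : ℂ) + n ^ 2 * π ^ 2 = (1 - π * I * n) * (1 + π * I * n) := by
    linear_combination (π ^ 2 * n ^ 2 : ℂ) * Complex.I_sq
  rw [coshFourierCoeff]
  push_cast
  rw [hden_sub, hden_add, hden, Complex.sinh]
  simp only [one_mul, mul_one, neg_mul, neg_neg, Complex.exp_neg]
  field_simp
  ring

theorem hasSum_coshFourierCoeff_smul_fourier {x : ℝ} (hx : x ∈ Set.Icc (-1 : ℝ) 1) :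
    HasSum (fun n => (coshFourierCoeff n : ℂ) • fourier n (x : AddCircle ((1 : ℝ) - -1)))
      (Real.cosh x) := by
  have hcoeff : fourierCoeffOn (by norm_num : (-1 : ℝ) < 1) (fun x => (Real.cosh x : ℂ)) =
      fun n => (coshFourierCoeff n : ℂ) :=
    funext fourierCoeffOn_cosh
  have h := hasSum_fourier_series_of_summable_fourierCoeffOn _ (by fun_prop) (by simp)
    (hcoeff ▸ Complex.summable_ofReal.2 summable_coshFourierCoeff) hx
  rwa [hcoeff] at h

/-- Fourier expansion of `cosh` on `[-1, 1]`:
`cosh x = sinh 1 · (1 + ∑_{n ≥ 1} 2(-1)ⁿ/(1 + n²π²) · cos(nπx))`. -/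
theorem statement14 :
    ∀ x ∈ Set.Icc (-1 : ℝ) 1,
      Summable (fun n : ℕ =>
        2 * (-1 : ℝ) ^ (n + 1) / (1 + ((n : ℝ) + 1) ^ 2 * π ^ 2) *
          Real.cos (((n : ℝ) + 1) * π * x)) ∧
      Real.cosh x = Real.sinh 1 *
        (1 + ∑' n : ℕ,
          2 * (-1 : ℝ) ^ (n + 1) / (1 + ((n : ℝ) + 1) ^ 2 * π ^ 2) *
            Real.cos (((n : ℝ) + 1) * π * x)) := by
  intro x hx
  have hcos := hasSum_cos_of_hasSum_fourier coshFourierCoeff_neg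
    (hasSum_coshFourierCoeff_smul_fourier hx)
  rw [show coshFourierCoeff 0 = Real.sinh 1 by simp [coshFourierCoeff]] at hcos
  have hsinh : Real.sinh 1 ≠ 0 := (sinh_pos_iff.2 one_pos).ne'
  have hseries : HasSum (fun n : ℕ => 2 * (-1 : ℝ) ^ (n + 1) / (1 + ((n : ℝ) + 1) ^ 2 * π ^ 2) *
      Real.cos (((n : ℝ) + 1) * π * x)) ((Real.cosh x - Real.sinh 1) / Real.sinh 1) := by
    refine (hcos.div_const (Real.sinh 1)).congr_fun fun n => ?_
    simp only [coshFourierCoeff, zpow_add_one₀ (by norm_num : (-1 : ℝ) ≠ 0), zpow_natCast]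
    push_cast
    field_simp
    ring_nf
  refine ⟨hseries.summable, ?_⟩
  rw [hseries.tsum_eq]
  field_simp
  ring
end

section
/- Let g_c : [−1, 1] → ℝ be defined by g_c(x) = 1 − 4x² for |x| ≤ 1/2 and g_c(x) = −1 + 4(1 − |x|)² for 1/2 ≤ |x| ≤ 1. Then for every x ∈ [−1, 1], the series Σ_{n=1}^{∞} (32·(−1)^{n+1}/((2n−1)³π³)) cos((2n−1)πx) converges and g_c(x) = Σ_{n=1}^{∞} (32·(−1)^{n+1}/((2n−1)³π³)) cos((2n−1)πx). -/
/-!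
The Fourier expansion of the Bernoulli polynomial `B₃` on `[0, 1]` evaluates `∑ sin(2πny)/n³`.
Subtracting the even-indexed terms (the same series at `2y`, scaled by `1/8`) leaves the odd part
`∑ sin((2k+1)πy)/(2k+1)³ = π³ y(1-y)/8`. With `y = x + 1/2` the sine becomes
`(-1)ᵏ cos((2k+1)πx)` and `y(1-y)` becomes `(1 - 4x²)/4`, which is the claim for `|x| ≤ 1/2`.
For `1/2 ≤ |x| ≤ 1` it follows from evenness and `cos((2k+1)π(1-x)) = -cos((2k+1)πx)`.
-/

open Real Set

theorem HasSum.odd_of_even {G : Type*} [AddCommGroup G] [UniformSpace G] [IsUniformAddGroup G]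
    [CompleteSpace G] [T2Space G] {f : ℕ → G} {a b : G} (hf : HasSum f a)
    (he : HasSum (fun k ↦ f (2 * k)) b) : HasSum (fun k ↦ f (2 * k + 1)) (a - b) := by
  obtain ⟨c, ho⟩ : Summable fun k ↦ f (2 * k + 1) :=
    hf.summable.comp_injective fun m n h ↦ by omega
  rwa [(he.even_add_odd ho).unique hf |>.symm, add_sub_cancel_left]

theorem Polynomial.bernoulli_three_map_eval (x : ℝ) :
    ((bernoulli 3).map (algebraMap ℚ ℝ)).eval x = x * (x - 1) * (2 * x - 1) / 2 := by
  simp [bernoulli, Finset.sum_range_succ, bernoulli_eq_bernoulli'_of_ne_one, bernoulli'_two,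
    bernoulli'_three]
  ring

theorem hasSum_one_div_nat_cube_mul_sin {x : ℝ} (hx : x ∈ Icc (0 : ℝ) 1) :
    HasSum (fun n : ℕ ↦ 1 / (n : ℝ) ^ 3 * sin (2 * π * n * x))
      (π ^ 3 / 3 * (x * (x - 1) * (2 * x - 1))) := by
  have h := hasSum_one_div_nat_pow_mul_sin one_ne_zero hx
  rw [show 2 * 1 + 1 = 3 from rfl, Polynomial.bernoulli_three_map_eval] at h
  rwa [show π ^ 3 / 3 * (x * (x - 1) * (2 * x - 1)) =
    (-1) ^ (1 + 1) * (2 * π) ^ 3 / 2 / (Nat.factorial 3 : ℝ) * (x * (x - 1) * (2 * x - 1) / 2) by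
      norm_num [Nat.factorial]; ring]

theorem hasSum_one_div_odd_cube_mul_sin {y : ℝ} (hy : y ∈ Icc (0 : ℝ) 1) :
    HasSum (fun k : ℕ ↦ 1 / (2 * k + 1 : ℝ) ^ 3 * sin ((2 * k + 1) * π * y))
      (π ^ 3 / 8 * (y * (1 - y))) := by
  have hy2 : y / 2 ∈ Icc (0 : ℝ) 1 := ⟨by linarith [hy.1], by linarith [hy.2]⟩
  have heven : HasSum
      (fun k : ℕ ↦ 1 / ((2 * k : ℕ) : ℝ) ^ 3 * sin (2 * π * (2 * k : ℕ) * (y / 2)))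
      (π ^ 3 / 3 * (y * (y - 1) * (2 * y - 1)) / 8) :=
    ((hasSum_one_div_nat_cube_mul_sin hy).div_const 8).congr_fun fun k ↦ by push_cast; ring_nf
  have hodd := (hasSum_one_div_nat_cube_mul_sin hy2).odd_of_even heven
  rw [show π ^ 3 / 8 * (y * (1 - y)) = π ^ 3 / 3 * (y / 2 * (y / 2 - 1) * (2 * (y / 2) - 1)) -
    π ^ 3 / 3 * (y * (y - 1) * (2 * y - 1)) / 8 by ring]
  exact hodd.congr_fun fun k ↦ by push_cast; ring_nf

noncomputable def almostCosTerm (x : ℝ) (n : ℕ) : ℝ :=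
  32 * (-1 : ℝ) ^ n / ((2 * (n : ℝ) + 1) ^ 3 * π ^ 3) * cos ((2 * (n : ℝ) + 1) * π * x)

theorem almostCosTerm_abs (x : ℝ) (n : ℕ) : almostCosTerm |x| n = almostCosTerm x n := by
  rcases abs_choice x with h | h <;> simp [almostCosTerm, h]

theorem almostCosTerm_one_sub (x : ℝ) (n : ℕ) :
    almostCosTerm (1 - x) n = -almostCosTerm x n := by
  have : (2 * (n : ℝ) + 1) * π * (1 - x) = π - (2 * (n : ℝ) + 1) * π * x + n * (2 * π) := by ring
  rw [almostCosTerm, almostCosTerm, this, cos_add_nat_mul_two_pi, cos_pi_sub]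
  ring

theorem hasSum_almostCosTerm_of_abs_le_half {x : ℝ} (hx : |x| ≤ 1 / 2) :
    HasSum (almostCosTerm x) (1 - 4 * x ^ 2) := by
  obtain ⟨hx₁, hx₂⟩ := abs_le.mp hx
  have hy : x + 1 / 2 ∈ Icc (0 : ℝ) 1 := ⟨by linarith, by linarith⟩
  have hshift (k : ℕ) : sin ((2 * k + 1) * π * (x + 1 / 2)) =
      (-1) ^ k * cos ((2 * k + 1) * π * x) := by
    rw [show (2 * k + 1) * π * (x + 1 / 2) = (2 * k + 1) * π * x + π / 2 + k * π by ring,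
      sin_add_nat_mul_pi, sin_add_pi_div_two]
  rw [show 1 - 4 * x ^ 2 = 32 / π ^ 3 * (π ^ 3 / 8 * ((x + 1 / 2) * (1 - (x + 1 / 2)))) by
    field_simp; ring]
  refine ((hasSum_one_div_odd_cube_mul_sin hy).mul_left (32 / π ^ 3)).congr_fun fun k ↦ ?_
  rw [hshift, almostCosTerm]
  field_simp

/-- Fourier expansion of the quadratic almost-cosinusoid `g_c` (`g_c(x) = 1 - 4x²` for
`|x| ≤ 1/2`, `g_c(x) = -1 + 4(1-|x|)²` for `1/2 ≤ |x| ≤ 1`):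
`g_c(x) = ∑_{n ≥ 1} 32(-1)^{n+1}/((2n-1)³π³) · cos((2n-1)πx)` on `[-1, 1]`. -/
theorem statement16 (gc : ℝ → ℝ)
    (h1 : ∀ x : ℝ, |x| ≤ 1 / 2 → gc x = 1 - 4 * x ^ 2)
    (h2 : ∀ x : ℝ, 1 / 2 ≤ |x| → |x| ≤ 1 → gc x = -1 + 4 * (1 - |x|) ^ 2) :
    ∀ x ∈ Set.Icc (-1 : ℝ) 1,
      Summable (fun n : ℕ =>
        32 * (-1 : ℝ) ^ n / ((2 * (n : ℝ) + 1) ^ 3 * π ^ 3) *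
          Real.cos ((2 * (n : ℝ) + 1) * π * x)) ∧
      gc x = ∑' n : ℕ,
        32 * (-1 : ℝ) ^ n / ((2 * (n : ℝ) + 1) ^ 3 * π ^ 3) *
          Real.cos ((2 * (n : ℝ) + 1) * π * x) := by
  rintro x ⟨hx₁, hx₂⟩
  suffices h : HasSum (almostCosTerm x) (gc x) from ⟨h.summable, h.tsum_eq.symm⟩
  rcases le_or_gt |x| (1 / 2) with hx | hx
  · rw [h1 x hx]
    exact hasSum_almostCosTerm_of_abs_le_half hx
  · have hx_le_one : |x| ≤ 1 := abs_le.mpr ⟨hx₁, hx₂⟩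
    have hx' : abs (1 - |x|) ≤ 1 / 2 := abs_le.mpr ⟨by linarith, by linarith⟩
    rw [h2 x hx.le hx_le_one, show -1 + 4 * (1 - |x|) ^ 2 = -(1 - 4 * (1 - |x|) ^ 2) by ring]
    refine (hasSum_almostCosTerm_of_abs_le_half hx').neg.congr_fun fun n ↦ ?_
    rw [almostCosTerm_one_sub, neg_neg, almostCosTerm_abs]
end
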